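/- arXiv:2412.05613 — 3 statements merged into one kernel-verified Lean document; each statement's English description precedes it below -/
import Mathlib

section
/- Let K := { y ∈ (C^(s))^m : y' + A·y = 0 on [a,b] and By = 0 } and let S be the complex subspace of ℂ^r whose underlying set is { c ∈ ℂ^r : there exists y ∈ (C^(s))^m with y' + A·y = 0 on [a,b] and By = c }. Then K is finite-dimensional, the quotient ℂ^r / S is finite-dimensional, and dim K − dim(ℂ^r / S) = m − r. -/
open Set Filter Topology

noncomputable section

/-- The norm `‖x‖_(l)` of a scalar function in `C^(l)` on `[a,b]`:
the sum over `j = 0, …, l` of the sup over `[a,b]` of `|x^(j)|`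
(derivatives are taken within `[a,b]`, i.e. one-sided at the endpoints). -/
def clNorm (l : ℕ) (a b : ℝ) (x : ℝ → ℂ) : ℝ :=
  ∑ j ∈ Finset.range (l + 1),
    ⨆ t : Set.Icc a b, ‖iteratedDerivWithin j x (Set.Icc a b) (t : ℝ)‖

/-- The norm of a `ℂ^m`-valued function in `(C^(l))^m`: the sum of the norms of its components. -/
def vecClNorm {m : ℕ} (l : ℕ) (a b : ℝ) (y : ℝ → Fin m → ℂ) : ℝ :=
  ∑ i, clNorm l a b fun t => y t i

/-- The norm of an `m×m`-matrix-valued function in `(C^(l))^{m×m}`: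
the maximum of the norms of its columns. -/
def matClNorm {m : ℕ} (l : ℕ) (a b : ℝ) (A : ℝ → Matrix (Fin m) (Fin m) ℂ) : ℝ :=
  ⨆ j : Fin m, vecClNorm l a b fun t i => A t i j

/-- Membership in `(C^(l))^m`: every component is `l` times continuously differentiable
on `[a,b]` (one-sided derivatives at the endpoints). -/
def VecCl {m : ℕ} (l : ℕ) (a b : ℝ) (y : ℝ → Fin m → ℂ) : Prop :=
  ∀ i, ContDiffOn ℝ l (fun t => y t i) (Set.Icc a b)

/-- Membership in `(C^(l))^{m×m}`. -/
def MatCl {m : ℕ} (l : ℕ) (a b : ℝ) (A : ℝ → Matrix (Fin m) (Fin m) ℂ) : Prop :=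
  ∀ i j, ContDiffOn ℝ l (fun t => A t i j) (Set.Icc a b)

/-- The differential expression `(Ly)(t) := y'(t) + A(t)·y(t)`, componentwise,
with the derivative taken within `[a,b]`. -/
def Lop {m : ℕ} (a b : ℝ) (A : ℝ → Matrix (Fin m) (Fin m) ℂ)
    (y : ℝ → Fin m → ℂ) : ℝ → Fin m → ℂ :=
  fun t i => derivWithin (fun u => y u i) (Set.Icc a b) t + (A t).mulVec (y t) i

/-- Continuity (boundedness) of a linear map `B : (C^(s))^m → ℂ^r`:
`‖By‖ ≤ K₀·‖y‖_(s)` for all `y ∈ (C^(s))^m`, where the norm on `ℂ^r` is the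
sum of the absolute values of the components. -/
def IsBddOp {m r : ℕ} (s : ℕ) (a b : ℝ)
    (B : (↥(Set.Icc a b) → Fin m → ℂ) →ₗ[ℂ] (Fin r → ℂ)) : Prop :=
  ∃ K₀ > 0, ∀ y : ℝ → Fin m → ℂ, VecCl s a b y →
    ∑ i, ‖B ((Set.Icc a b).restrict y) i‖ ≤ K₀ * vecClNorm s a b y

/-- `Y` is the fundamental matrix of `A`: `Y ∈ (C^(s))^{m×m}`,
`Y'(t) + A(t)·Y(t) = 0` on `[a,b]` (componentwise), and `Y(a) = I_m`. -/
def IsFundMatrix {m : ℕ} (s : ℕ) (a b : ℝ) (A Y : ℝ → Matrix (Fin m) (Fin m) ℂ) : Prop :=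
  MatCl s a b Y ∧
  (∀ t ∈ Set.Icc a b, ∀ i j,
    derivWithin (fun u => Y u i j) (Set.Icc a b) t + (A t * Y t) i j = 0) ∧
  Y a = 1

/-- `M` is the characteristic matrix `M(L,B)`: its `j`-th column is `B` applied to
the `j`-th column of the fundamental matrix `Y`. -/
def IsCharMatrix {m r : ℕ} (a b : ℝ)
    (B : (↥(Set.Icc a b) → Fin m → ℂ) →ₗ[ℂ] (Fin r → ℂ))
    (Y : ℝ → Matrix (Fin m) (Fin m) ℂ) (M : Matrix (Fin r) (Fin m) ℂ) : Prop :=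
  ∀ j, (fun i => M i j) = B ((Set.Icc a b).restrict fun t k => Y t k j)

section FredholmAux
variable {m : ℕ} {a b : ℝ} {A : ℝ → Matrix (Fin m) (Fin m) ℂ}

lemma myHasDerivWithinAt_singleton (f : ℝ → (Fin m → ℂ)) (f' : Fin m → ℂ) (x : ℝ) :
    HasDerivWithinAt f f' {x} x := by
  rw [hasDerivWithinAt_iff_isLittleO, nhdsWithin_singleton]
  simp [Asymptotics.isLittleO_pure]

lemma aux_bound (hab : a ≤ b) (hA : ∀ i j, ContinuousOn (fun t => A t i j) (Icc a b)) :
    ∃ K : ℝ, 0 ≤ K ∧ ∀ t ∈ Icc a b, ∀ x : Fin m → ℂ, ‖(A t).mulVec x‖ ≤ K * ‖x‖ := by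
  set g : ℝ → ℝ := fun t => ∑ i, ∑ j, ‖A t i j‖ with hgdef
  have hgc : ContinuousOn g (Icc a b) := by
    apply continuousOn_finset_sum
    intro i _
    apply continuousOn_finset_sum
    intro j _
    exact (hA i j).norm
  obtain ⟨t₀, ht₀, hmax⟩ := isCompact_Icc.exists_isMaxOn (nonempty_Icc.mpr hab) hgc
  have hg0 : ∀ t, 0 ≤ g t := fun t =>
    Finset.sum_nonneg fun i _ => Finset.sum_nonneg fun j _ => norm_nonneg _
  refine ⟨g t₀, hg0 t₀, fun t ht x => ?_⟩
  have hx : ∀ j, ‖x j‖ ≤ ‖x‖ := fun j => norm_le_pi_norm x j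
  rw [pi_norm_le_iff_of_nonneg (by positivity)]
  intro i
  calc ‖(A t).mulVec x i‖ = ‖∑ j, A t i j * x j‖ := by
        simp [Matrix.mulVec, dotProduct]
    _ ≤ ∑ j, ‖A t i j * x j‖ := norm_sum_le _ _
    _ ≤ ∑ j, ‖A t i j‖ * ‖x‖ := Finset.sum_le_sum fun j _ => by
        rw [norm_mul]; exact mul_le_mul_of_nonneg_left (hx j) (norm_nonneg _)
    _ = (∑ j, ‖A t i j‖) * ‖x‖ := (Finset.sum_mul _ _ _).symm
    _ ≤ g t₀ * ‖x‖ := by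
        refine mul_le_mul_of_nonneg_right (le_trans ?_ (hmax ht)) (norm_nonneg _)
        exact Finset.single_le_sum (f := fun i => ∑ j, ‖A t i j‖)
          (fun i _ => Finset.sum_nonneg fun j _ => norm_nonneg _) (Finset.mem_univ i)

lemma aux_lip {K : ℝ} (hK0 : 0 ≤ K)
    (hK : ∀ t ∈ Icc a b, ∀ x : Fin m → ℂ, ‖(A t).mulVec x‖ ≤ K * ‖x‖) :
    ∀ t ∈ Icc a b, LipschitzWith (Real.toNNReal K) (fun x : Fin m → ℂ => -(A t).mulVec x) := by
  intro t ht
  apply LipschitzWith.of_dist_le_mul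
  intro x x'
  rw [dist_eq_norm, dist_eq_norm, Real.coe_toNNReal K hK0]
  have h1 : -(A t).mulVec x - -(A t).mulVec x' = (A t).mulVec (x' - x) := by
    rw [Matrix.mulVec_sub]; abel
  rw [h1, norm_sub_rev x x']
  exact hK t ht _

lemma aux_cont (hA : ∀ i j, ContinuousOn (fun t => A t i j) (Icc a b)) (x : Fin m → ℂ) :
    ContinuousOn (fun t => -(A t).mulVec x) (Icc a b) := by
  rw [continuousOn_pi]
  intro i
  have : (fun t => (-(A t).mulVec x) i) = fun t => -(∑ j, A t i j * x j) := by
    funext t; simp [Matrix.mulVec, dotProduct]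
  rw [this]
  exact (continuousOn_finset_sum _ fun j _ => (hA i j).mul continuousOn_const).neg


lemma myHasDerivWithinAt_of_nmem_closure {f : ℝ → Fin m → ℂ} {f' : Fin m → ℂ}
    {s : Set ℝ} {x : ℝ} (h : x ∉ closure s) : HasDerivWithinAt f f' s x := by
  have h2 := HasFDerivWithinAt.of_notMem_closure (f := f)
    (f' := ContinuousLinearMap.smulRight (1 : ℝ →L[ℝ] ℝ) f') (x := x) (s := s) h
  simpa using h2.hasDerivWithinAt

lemma exist_sol (hab : a ≤ b) (hA : ∀ i j, ContinuousOn (fun t => A t i j) (Icc a b))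
    (c : Fin m → ℂ) :
    ∃ y : ℝ → Fin m → ℂ, y a = c ∧
      ∀ t ∈ Icc a b, HasDerivWithinAt y (-(A t).mulVec (y t)) (Icc a b) t := by
  obtain ⟨K, hK0, hK⟩ := aux_bound hab hA
  have lipAll := aux_lip hK0 hK
  set δ : ℝ := 1 / (2 * K + 1) with hδdef
  have hδ : 0 < δ := by positivity
  -- one Picard–Lindelöf step
  have step : ∀ t₀ ∈ Icc a b, ∀ x₀ : Fin m → ℂ, ∃ y : ℝ → Fin m → ℂ, y t₀ = x₀ ∧
      ∀ t ∈ Icc t₀ (min b (t₀ + δ)),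
        HasDerivWithinAt y (-(A t).mulVec (y t)) (Icc t₀ (min b (t₀ + δ))) t := by
    intro t₀ ht₀ x₀
    have hsub : Icc t₀ (min b (t₀ + δ)) ⊆ Icc a b :=
      Icc_subset_Icc ht₀.1 (min_le_left _ _)
    have hpl : IsPicardLindelof (fun t x => -(A t).mulVec x)
        (⟨t₀, le_refl _, le_min ht₀.2 (by linarith)⟩ : Icc t₀ (min b (t₀ + δ))) x₀
        (⟨‖x₀‖ + 1, by positivity⟩ : NNReal) 0
        (⟨K * (2 * ‖x₀‖ + 1) + 1, by positivity⟩ : NNReal) (Real.toNNReal K) := by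
      have hN : (0:ℝ) ≤ ‖x₀‖ := norm_nonneg _
      refine ⟨?_, ?_, ?_, ?_⟩
      · intro t ht
        exact (lipAll t (hsub ht)).lipschitzOnWith
      · intro x _
        exact (aux_cont hA x).mono hsub
      · intro t ht x hx
        show ‖-(A t).mulVec x‖ ≤ K * (2 * ‖x₀‖ + 1) + 1
        have hxn : ‖x‖ ≤ 2 * ‖x₀‖ + 1 := by
          have : ‖x - x₀‖ ≤ ‖x₀‖ + 1 := mem_closedBall_iff_norm.mp hx
          have h2 : ‖x‖ ≤ ‖x - x₀‖ + ‖x₀‖ := by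
            calc ‖x‖ = ‖x - x₀ + x₀‖ := by rw [sub_add_cancel]
              _ ≤ ‖x - x₀‖ + ‖x₀‖ := norm_add_le _ _
          linarith
        have := hK t (hsub ht) x
        rw [norm_neg]
        nlinarith
      · simp only [NNReal.coe_mk, NNReal.coe_zero, sub_zero]
        have h1 : max (min b (t₀ + δ) - t₀) (t₀ - t₀) ≤ δ := by
          apply max_le
          · linarith [min_le_right b (t₀ + δ)]
          · linarith
        have hC0 : (0:ℝ) ≤ K * (2 * ‖x₀‖ + 1) + 1 := by positivity
        calc (K * (2 * ‖x₀‖ + 1) + 1) * max (min b (t₀ + δ) - t₀) (t₀ - t₀)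
            ≤ (K * (2 * ‖x₀‖ + 1) + 1) * δ := by
              exact mul_le_mul_of_nonneg_left h1 hC0
          _ ≤ ‖x₀‖ + 1 := by
              rw [hδdef]
              rw [mul_one_div, div_le_iff₀ (by positivity)]
              nlinarith [norm_nonneg x₀]
    obtain ⟨y, hy0, hy⟩ := hpl.exists_eq_forall_mem_Icc_hasDerivWithinAt₀
    exact ⟨y, hy0, hy⟩
  -- induction on the number of steps
  have main : ∀ n : ℕ, ∃ y : ℝ → Fin m → ℂ, y a = c ∧
      ∀ t ∈ Icc a (min b (a + n * δ)),
        HasDerivWithinAt y (-(A t).mulVec (y t)) (Icc a (min b (a + n * δ))) t := by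
    intro n
    induction n with
    | zero =>
      refine ⟨fun _ => c, rfl, ?_⟩
      have he : min b (a + (0:ℕ) * δ) = a := by
        simp [min_eq_right hab]
      rw [he]
      intro t ht
      have : t = a := le_antisymm ht.2 ht.1
      subst this
      rw [Icc_self]
      exact myHasDerivWithinAt_singleton _ _ _
    | succ n ih =>
      obtain ⟨y₁, hy₁a, hy₁⟩ := ih
      by_cases hbn : b ≤ a + n * δ
      · have e1 : min b (a + (n:ℕ) * δ) = b := min_eq_left hbn
        have e2 : min b (a + ((n:ℕ)+1) * δ) = b := min_eq_left (by push_cast; nlinarith)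
        refine ⟨y₁, hy₁a, ?_⟩
        rw [show ((n+1:ℕ):ℝ) = (n:ℝ)+1 by push_cast; ring, e2]
        rw [e1] at hy₁
        exact hy₁
      · push_neg at hbn
        set t₀ : ℝ := min b (a + n * δ) with ht₀def
        have ht₀eq : t₀ = a + n * δ := min_eq_right hbn.le
        have hat₀ : a ≤ t₀ := by
          rw [ht₀eq]; nlinarith [Nat.cast_nonneg (α := ℝ) n]
        have ht₀mem : t₀ ∈ Icc a b := ⟨hat₀, min_le_left _ _⟩
        obtain ⟨y₂, hy₂0, hy₂⟩ := step t₀ ht₀mem (y₁ t₀)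
        set t₁ : ℝ := min b (t₀ + δ) with ht₁def
        have e : min b (a + ((n:ℕ)+1) * δ) = t₁ := by
          rw [ht₁def, ht₀eq]; push_cast; ring_nf
        have ht₀t₁ : t₀ ≤ t₁ := le_min ht₀mem.2 (by linarith)
        set y : ℝ → Fin m → ℂ := fun t => if t ≤ t₀ then y₁ t else y₂ t with hydef
        have hy_eq₁ : EqOn y y₁ (Icc a t₀) := fun u hu => if_pos hu.2
        have hy_eq₂ : EqOn y y₂ (Icc t₀ t₁) := by
          intro u hu
          by_cases h : u ≤ t₀
          · have hu0 : u = t₀ := le_antisymm h hu.1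
            subst hu0
            simp only [hydef, if_pos le_rfl, hy₂0]
          · exact if_neg h
        refine ⟨y, ?_, ?_⟩
        · simp only [hydef, if_pos hat₀, hy₁a]
        · rw [show ((n+1:ℕ):ℝ) = (n:ℝ)+1 by push_cast; ring, e]
          intro t ht
          have hset : Icc a t₀ ∪ Icc t₀ t₁ = Icc a t₁ := Icc_union_Icc_eq_Icc hat₀ ht₀t₁
          have H₁ : HasDerivWithinAt y (-(A t).mulVec (y t)) (Icc a t₀) t := by
            by_cases h : t ≤ t₀
            · have htm : t ∈ Icc a t₀ := ⟨ht.1, h⟩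
              have h2 := (hy₁ t htm).congr (fun u hu => hy_eq₁ hu) (hy_eq₁ htm)
              rw [show y t = y₁ t from hy_eq₁ htm]
              exact h2
            · refine myHasDerivWithinAt_of_nmem_closure ?_
              rw [closure_Icc]
              exact fun hc => h hc.2
          have H₂ : HasDerivWithinAt y (-(A t).mulVec (y t)) (Icc t₀ t₁) t := by
            by_cases h : t₀ ≤ t
            · have htm : t ∈ Icc t₀ t₁ := ⟨h, ht.2⟩
              have h2 := (hy₂ t htm).congr (fun u hu => hy_eq₂ hu) (hy_eq₂ htm)
              rw [show y t = y₂ t from hy_eq₂ htm]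
              exact h2
            · refine myHasDerivWithinAt_of_nmem_closure ?_
              rw [closure_Icc]
              exact fun hc => h hc.1
          have := H₁.union H₂
          rwa [hset] at this
  obtain ⟨n, hn⟩ := exists_nat_ge ((b - a) / δ)
  have hb : b ≤ a + n * δ := by
    rw [div_le_iff₀ hδ] at hn
    linarith
  obtain ⟨y, hya, hy⟩ := main n
  rw [min_eq_left hb] at hy
  exact ⟨y, hya, hy⟩


lemma unique_sol (hab : a ≤ b) (hA : ∀ i j, ContinuousOn (fun t => A t i j) (Icc a b))
    {y z : ℝ → Fin m → ℂ}
    (hy : ∀ t ∈ Icc a b, HasDerivWithinAt y (-(A t).mulVec (y t)) (Icc a b) t)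
    (hz : ∀ t ∈ Icc a b, HasDerivWithinAt z (-(A t).mulVec (z t)) (Icc a b) t)
    (hinit : y a = z a) : EqOn y z (Icc a b) := by
  obtain ⟨K, hK0, hK⟩ := aux_bound hab hA
  have lipAll := aux_lip hK0 hK
  set w : ℝ → (Fin m → ℂ) → (Fin m → ℂ) :=
    fun t x => if t ∈ Icc a b then -(A t).mulVec x else 0 with hwdef
  have hlip : ∀ t, LipschitzOnWith (Real.toNNReal K) (w t) univ := by
    intro t
    by_cases ht : t ∈ Icc a b
    · have hw : w t = fun x : Fin m → ℂ => -(A t).mulVec x := by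
        funext x; simp only [hwdef, if_pos ht]
      rw [hw]
      exact (lipAll t ht).lipschitzOnWith (s := univ)
    · have hw : w t = fun _ : Fin m → ℂ => (0 : Fin m → ℂ) := by
        funext x; simp only [hwdef, if_neg ht]
      rw [hw]
      exact ((LipschitzWith.const (0 : Fin m → ℂ)).weaken zero_le).lipschitzOnWith
  have key : ∀ u : ℝ → Fin m → ℂ,
      (∀ t ∈ Icc a b, HasDerivWithinAt u (-(A t).mulVec (u t)) (Icc a b) t) →
      ∀ t ∈ Ico a b, HasDerivWithinAt u (w t (u t)) (Ici t) t := by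
    intro u hu t ht
    have h1 := (hu t (Ico_subset_Icc_self ht)).mono_of_mem_nhdsWithin
      (Icc_mem_nhdsGE_of_mem ht)
    have hw : w t (u t) = -(A t).mulVec (u t) := by
      simp only [hwdef, if_pos (Ico_subset_Icc_self ht)]
    rw [hw]
    exact h1
  exact ODE_solution_unique_of_mem_Icc_right (v := w) (s := fun _ => univ) (fun t _ => hlip t)
    (fun t ht => (hy t ht).continuousWithinAt)
    (key y hy) (fun _ _ => mem_univ _)
    (fun t ht => (hz t ht).continuousWithinAt)
    (key z hz) (fun _ _ => mem_univ _) hinit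

lemma regular_sol (hab : a < b) {s : ℕ} (hs : 1 ≤ s)
    (hA : ∀ i j, ContDiffOn ℝ (s - 1 : ℕ) (fun t => A t i j) (Icc a b))
    {y : ℝ → Fin m → ℂ}
    (hy : ∀ t ∈ Icc a b, HasDerivWithinAt y (-(A t).mulVec (y t)) (Icc a b) t) :
    ContDiffOn ℝ s y (Icc a b) := by
  have hud := uniqueDiffOn_Icc hab
  have hdiff : DifferentiableOn ℝ y (Icc a b) := fun t ht =>
    (hy t ht).differentiableWithinAt
  have hderiv : ∀ t ∈ Icc a b, derivWithin y (Icc a b) t = -(A t).mulVec (y t) :=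
    fun t ht => (hy t ht).derivWithin (hud t ht)
  have claim : ∀ n : ℕ, n ≤ s → ContDiffOn ℝ n y (Icc a b) := by
    intro n
    induction n with
    | zero =>
      intro _
      have h0 : ContinuousOn y (Icc a b) := fun t ht => (hy t ht).continuousWithinAt
      exact (contDiffOn_zero.mpr h0).of_le (le_of_eq (by norm_cast))
    | succ k ih =>
      intro hks
      have hyk : ContDiffOn ℝ k y (Icc a b) := ih (Nat.le_of_succ_le hks)
      have hcast : ((k+1:ℕ) : WithTop ℕ∞) = ((k:ℕ) : WithTop ℕ∞) + 1 := by push_cast; ring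
      rw [hcast, contDiffOn_succ_iff_derivWithin hud]
      refine ⟨hdiff, ?_, ?_⟩
      · intro h
        exact absurd h (by exact_mod_cast WithTop.natCast_ne_top k)
      · apply ContDiffOn.congr _ (fun t ht => (hderiv t ht))
        rw [contDiffOn_pi]
        intro i
        have hcomp : (fun t => (-(A t).mulVec (y t)) i)
            = fun t => -(∑ j, A t i j * y t j) := by
          funext t; simp [Matrix.mulVec, dotProduct]
        rw [hcomp]
        apply ContDiffOn.neg
        apply ContDiffOn.sum
        intro j _
        have hyj : ContDiffOn ℝ k (fun t => y t j) (Icc a b) :=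
          (ContinuousLinearMap.proj (R := ℝ) (φ := fun _ : Fin m => ℂ) j).contDiff.comp_contDiffOn hyk
        have hAij : ContDiffOn ℝ k (fun t => A t i j) (Icc a b) := by
          apply (hA i j).of_le
          exact_mod_cast Nat.le_sub_one_of_lt hks
        exact hAij.mul hyj
  exact claim s le_rfl


lemma vecCl_of {s : ℕ} {y : ℝ → Fin m → ℂ} (h : ContDiffOn ℝ s y (Icc a b)) :
    VecCl s a b y := fun i =>
  (ContinuousLinearMap.proj (R := ℝ) (φ := fun _ : Fin m => ℂ) i).contDiff.comp_contDiffOn h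

lemma Lop_of_sol (hab : a < b) {y : ℝ → Fin m → ℂ}
    (hy : ∀ t ∈ Icc a b, HasDerivWithinAt y (-(A t).mulVec (y t)) (Icc a b) t) :
    ∀ t ∈ Icc a b, Lop a b A y t = 0 := by
  intro t ht
  funext i
  have hd := (hasDerivWithinAt_pi.mp (hy t ht) i).derivWithin (uniqueDiffOn_Icc hab t ht)
  simp only [Lop, hd, Pi.neg_apply, Pi.zero_apply]
  ring

lemma sol_of_Lop (hab : a < b) {s : ℕ} (hs : 1 ≤ s) {y : ℝ → Fin m → ℂ}
    (h1 : VecCl s a b y) (h2 : ∀ t ∈ Icc a b, Lop a b A y t = 0) :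
    ∀ t ∈ Icc a b, HasDerivWithinAt y (-(A t).mulVec (y t)) (Icc a b) t := by
  intro t ht
  rw [hasDerivWithinAt_pi]
  intro i
  have hd : DifferentiableWithinAt ℝ (fun u => y u i) (Icc a b) t :=
    ((h1 i).differentiableOn (by exact_mod_cast (by omega : s ≠ 0))) t ht
  have he : derivWithin (fun u => y u i) (Icc a b) t = -((A t).mulVec (y t) i) := by
    have h3 := congrFun (h2 t ht) i
    simp only [Lop, Pi.zero_apply] at h3
    linear_combination h3
  have h4 := hd.hasDerivWithinAt
  rw [he] at h4
  simpa using h4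


end FredholmAux

/-- The kernel `K` of the problem `(L,B)` is finite-dimensional, the
quotient `ℂ^r / S` by the "range in `ℂ^r`" subspace `S` is finite-dimensional, and
`dim K − dim(ℂ^r/S) = m − r`. -/
theorem fredholm_index_eq
    (a b : ℝ) (hab : a < b) (m s r : ℕ) (hm : 1 ≤ m) (hs : 1 ≤ s) (hr : 1 ≤ r)
    (A : ℝ → Matrix (Fin m) (Fin m) ℂ) (hA : MatCl (s - 1) a b A)
    (B : (↥(Set.Icc a b) → Fin m → ℂ) →ₗ[ℂ] (Fin r → ℂ)) (hB : IsBddOp s a b B)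
    (S : Submodule ℂ (Fin r → ℂ))
    (hS : (S : Set (Fin r → ℂ)) =
      {c | ∃ y : ℝ → Fin m → ℂ, VecCl s a b y ∧
        (∀ t ∈ Set.Icc a b, Lop a b A y t = 0) ∧
        B ((Set.Icc a b).restrict y) = c}) :
    ∃ K : Submodule ℂ (↥(Set.Icc a b) → Fin m → ℂ),
      (K : Set (↥(Set.Icc a b) → Fin m → ℂ)) =
        {g | ∃ y : ℝ → Fin m → ℂ, VecCl s a b y ∧
          (∀ t ∈ Set.Icc a b, Lop a b A y t = 0) ∧
          B ((Set.Icc a b).restrict y) = 0 ∧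
          (Set.Icc a b).restrict y = g} ∧
      FiniteDimensional ℂ K ∧
      FiniteDimensional ℂ ((Fin r → ℂ) ⧸ S) ∧
      (Module.finrank ℂ K : ℤ) - (Module.finrank ℂ ((Fin r → ℂ) ⧸ S) : ℤ)
        = (m : ℤ) - (r : ℤ) := by
  have hab' : a ≤ b := hab.le
  have hAc : ∀ i j, ContinuousOn (fun t => A t i j) (Icc a b) := fun i j =>
    (hA i j).continuousOn
  choose sol hsol₁ hsol₂ using fun c => exist_sol hab' hAc c
  have hrestr : ∀ {y z : ℝ → Fin m → ℂ}, EqOn y z (Icc a b) →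
      (Icc a b).restrict y = (Icc a b).restrict z := fun h => funext fun t => h t.2
  -- Φ : initial value ↦ restricted solution, as a linear map
  have hadd : ∀ c c' : Fin m → ℂ,
      (Icc a b).restrict (sol (c + c'))
        = (Icc a b).restrict (sol c) + (Icc a b).restrict (sol c') := by
    intro c c'
    have hsum : ∀ t ∈ Icc a b, HasDerivWithinAt (fun u => sol c u + sol c' u)
        (-(A t).mulVec (sol c t + sol c' t)) (Icc a b) t := by
      intro t ht
      have h := (hsol₂ c t ht).add (hsol₂ c' t ht)
      refine h.congr_deriv ?_
      rw [Matrix.mulVec_add]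
      abel
    have := unique_sol hab' hAc (hsol₂ (c + c')) hsum
      (by rw [hsol₁, hsol₁, hsol₁])
    exact funext fun t => this t.2
  have hsmul : ∀ (k : ℂ) (c : Fin m → ℂ),
      (Icc a b).restrict (sol (k • c)) = k • (Icc a b).restrict (sol c) := by
    intro k c
    have hsm : ∀ t ∈ Icc a b, HasDerivWithinAt (fun u => k • sol c u)
        (-(A t).mulVec (k • sol c t)) (Icc a b) t := by
      intro t ht
      have h := (hsol₂ c t ht).const_smul k
      refine h.congr_deriv ?_
      rw [Matrix.mulVec_smul]
      module
    have := unique_sol hab' hAc (hsol₂ (k • c)) hsm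
      (by rw [hsol₁]; simp [hsol₁])
    exact funext fun t => this t.2
  let Φ : (Fin m → ℂ) →ₗ[ℂ] (↥(Icc a b) → Fin m → ℂ) :=
    { toFun := fun c => (Icc a b).restrict (sol c)
      map_add' := hadd
      map_smul' := hsmul }
  have hamem : a ∈ Icc a b := left_mem_Icc.mpr hab'
  have hΦinj : Function.Injective Φ := by
    intro c c' h
    have h2 := congrFun h (⟨a, hamem⟩ : ↥(Icc a b))
    have e1 : Φ c ⟨a, hamem⟩ = c := hsol₁ c
    have e2 : Φ c' ⟨a, hamem⟩ = c' := hsol₁ c'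
    rw [e1, e2] at h2
    exact h2
  -- properties of solutions
  have hsolP : ∀ c, VecCl s a b (sol c) ∧ ∀ t ∈ Icc a b, Lop a b A (sol c) t = 0 :=
    fun c => ⟨vecCl_of (regular_sol hab hs hA (hsol₂ c)), Lop_of_sol hab (hsol₂ c)⟩
  have hΦy : ∀ y : ℝ → Fin m → ℂ, VecCl s a b y →
      (∀ t ∈ Icc a b, Lop a b A y t = 0) → Φ (y a) = (Icc a b).restrict y := by
    intro y hy1 hy2
    exact hrestr (unique_sol hab' hAc (hsol₂ (y a)) (sol_of_Lop hab hs hy1 hy2) (hsol₁ (y a)))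
  set BΦ := B.comp Φ with hBΦ
  refine ⟨Submodule.map Φ (LinearMap.ker BΦ), ?_, ?_, ?_, ?_⟩
  · ext g
    simp only [SetLike.mem_coe, Submodule.mem_map, LinearMap.mem_ker, mem_setOf_eq]
    constructor
    · rintro ⟨c, hc, rfl⟩
      exact ⟨sol c, (hsolP c).1, (hsolP c).2, hc, rfl⟩
    · rintro ⟨y, hy1, hy2, hy3, rfl⟩
      refine ⟨y a, ?_, hΦy y hy1 hy2⟩
      show B (Φ (y a)) = 0
      rw [hΦy y hy1 hy2]
      exact hy3
  · exact Module.Finite.equiv (Submodule.equivMapOfInjective Φ hΦinj (LinearMap.ker BΦ))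
  · infer_instance
  · have hSeq : S = LinearMap.range BΦ := by
      apply SetLike.ext'
      rw [hS]
      ext c
      simp only [mem_setOf_eq, SetLike.mem_coe, LinearMap.mem_range]
      constructor
      · rintro ⟨y, hy1, hy2, rfl⟩
        refine ⟨y a, ?_⟩
        show B (Φ (y a)) = _
        rw [hΦy y hy1 hy2]
      · rintro ⟨c₀, rfl⟩
        exact ⟨sol c₀, (hsolP c₀).1, (hsolP c₀).2, rfl⟩
    have hdim1 : Module.finrank ℂ (Submodule.map Φ (LinearMap.ker BΦ))
        = Module.finrank ℂ (LinearMap.ker BΦ) :=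
      ((Submodule.equivMapOfInjective Φ hΦinj (LinearMap.ker BΦ)).finrank_eq).symm
    have h1 : Module.finrank ℂ (LinearMap.range BΦ) + Module.finrank ℂ (LinearMap.ker BΦ)
        = m := by
      rw [LinearMap.finrank_range_add_finrank_ker BΦ, Module.finrank_fin_fun]
    have h2 : Module.finrank ℂ ((Fin r → ℂ) ⧸ S) + Module.finrank ℂ S = r := by
      rw [Submodule.finrank_quotient_add_finrank, Module.finrank_fin_fun]
    have h3 : Module.finrank ℂ S = Module.finrank ℂ (LinearMap.range BΦ) := by
      rw [hSeq]
    rw [hdim1]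
    omega
end
end

section
/- Let A and A_k (k ∈ ℕ) be matrix-valued functions in (C^(s-1))^{m×m}. Then the following three conditions are equivalent as k → ∞: (i) for every y ∈ (C^(s))^m one has ‖(A_k − A)·y‖_(s-1) → 0 (strong convergence of the operators L_k := d/dt + A_k to L := d/dt + A on (C^(s))^m); (ii) ‖A_k − A‖_(s-1) → 0; (iii) sup { ‖(A_k − A)·y‖_(s-1) : y ∈ (C^(s))^m, ‖y‖_(s) ≤ 1 } → 0 (uniform convergence of the operators L_k to L). -/
open Set Filter Topology

noncomputable section

section ProofHelpers

variable {a b : ℝ}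

lemma icc_ne (hab : a < b) : Nonempty (Set.Icc a b) :=
  Set.Nonempty.to_subtype (Set.nonempty_Icc.mpr hab.le)

lemma bdd_sup (hab : a < b) {l j : ℕ} {x : ℝ → ℂ}
    (hx : ContDiffOn ℝ l x (Set.Icc a b)) (hj : j ≤ l) :
    BddAbove (Set.range fun t : Set.Icc a b =>
      ‖iteratedDerivWithin j x (Set.Icc a b) (t : ℝ)‖) := by
  obtain ⟨C, hC⟩ := (isCompact_Icc (a := a) (b := b)).exists_bound_of_continuousOn
    (hx.continuousOn_iteratedDerivWithin (by exact_mod_cast hj) (uniqueDiffOn_Icc hab))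
  exact ⟨C, by rintro v ⟨t, rfl⟩; exact hC t t.2⟩

lemma sup_nn {j : ℕ} {x : ℝ → ℂ} :
    0 ≤ ⨆ t : Set.Icc a b, ‖iteratedDerivWithin j x (Set.Icc a b) (t : ℝ)‖ :=
  Real.iSup_nonneg fun _ => norm_nonneg _

lemma clNorm_nonneg {l : ℕ} {x : ℝ → ℂ} : 0 ≤ clNorm l a b x :=
  Finset.sum_nonneg fun _ _ => sup_nn

lemma le_clNorm (hab : a < b) {l j : ℕ} {x : ℝ → ℂ}
    (hx : ContDiffOn ℝ l x (Set.Icc a b)) (hj : j ≤ l) {t : ℝ} (ht : t ∈ Set.Icc a b) :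
    ‖iteratedDerivWithin j x (Set.Icc a b) t‖ ≤ clNorm l a b x := by
  have h1 : ‖iteratedDerivWithin j x (Set.Icc a b) t‖ ≤
      ⨆ t : Set.Icc a b, ‖iteratedDerivWithin j x (Set.Icc a b) (t : ℝ)‖ :=
    le_ciSup (bdd_sup hab hx hj) (⟨t, ht⟩ : Set.Icc a b)
  refine h1.trans ?_
  exact Finset.single_le_sum (f := fun j => ⨆ t : Set.Icc a b,
    ‖iteratedDerivWithin j x (Set.Icc a b) (t : ℝ)‖)
    (fun _ _ => sup_nn) (Finset.mem_range.mpr (Nat.lt_succ_of_le hj))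

lemma clNorm_mono {l l' : ℕ} (h : l ≤ l') (x : ℝ → ℂ) :
    clNorm l a b x ≤ clNorm l' a b x :=
  Finset.sum_le_sum_of_subset_of_nonneg
    (Finset.range_subset_range.mpr (by omega)) (fun _ _ _ => sup_nn)

lemma iteratedDerivWithin_const' (hab : a < b) {j : ℕ} (hj : j ≠ 0) (c : ℂ)
    {t : ℝ} (ht : t ∈ Set.Icc a b) :
    iteratedDerivWithin j (fun _ => c) (Set.Icc a b) t = 0 := by
  rw [iteratedDerivWithin_eq_iteratedFDerivWithin,
    iteratedFDerivWithin_const_of_ne hj c (Set.Icc a b)]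
  simp

lemma clNorm_const (hab : a < b) {l : ℕ} (c : ℂ) :
    clNorm l a b (fun _ => c) = ‖c‖ := by
  haveI := icc_ne hab
  rw [clNorm]
  rw [Finset.sum_eq_single 0]
  · simp
  · intro j _ hj
    have : ∀ t : Set.Icc a b,
        ‖iteratedDerivWithin j (fun _ => c) (Set.Icc a b) (t : ℝ)‖ = 0 := by
      intro t; rw [iteratedDerivWithin_const' hab hj c t.2]; simp
    simp only [this]
    exact ciSup_const
  · intro h; simp at h



lemma clNorm_le_of_ptwise (hab : a < b) {l : ℕ} {x : ℝ → ℂ} {C : ℝ} (hC : 0 ≤ C)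
    (h : ∀ j ≤ l, ∀ t ∈ Set.Icc a b, ‖iteratedDerivWithin j x (Set.Icc a b) t‖ ≤ C) :
    clNorm l a b x ≤ (l + 1) * C := by
  haveI := icc_ne hab
  have : ∀ j ∈ Finset.range (l + 1),
      (⨆ t : Set.Icc a b, ‖iteratedDerivWithin j x (Set.Icc a b) (t : ℝ)‖) ≤ C := by
    intro j hj
    exact Real.iSup_le (fun t => h j (by simpa [Nat.lt_succ_iff] using hj) t t.2) hC
  calc clNorm l a b x ≤ ∑ _j ∈ Finset.range (l + 1), C := Finset.sum_le_sum this
  _ = (l + 1) * C := by simp [mul_comm]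

lemma clNorm_mul_le (hab : a < b) {l : ℕ} {f g : ℝ → ℂ}
    (hf : ContDiffOn ℝ l f (Set.Icc a b)) (hg : ContDiffOn ℝ l g (Set.Icc a b)) :
    clNorm l a b (fun t => f t * g t) ≤
      ((l + 1) * 2 ^ l) * (clNorm l a b f * clNorm l a b g) := by
  have key : ∀ j ≤ l, ∀ t ∈ Set.Icc a b,
      ‖iteratedDerivWithin j (fun t => f t * g t) (Set.Icc a b) t‖ ≤
        2 ^ l * (clNorm l a b f * clNorm l a b g) := by
    intro n hn t ht
    have h1 : ‖iteratedDerivWithin n (fun t => f t * g t) (Set.Icc a b) t‖ ≤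
        ∑ i ∈ Finset.range (n + 1), (n.choose i : ℝ) *
          ‖iteratedDerivWithin i f (Set.Icc a b) t‖ *
          ‖iteratedDerivWithin (n - i) g (Set.Icc a b) t‖ := by
      rw [← norm_iteratedFDerivWithin_eq_norm_iteratedDerivWithin]
      simp_rw [← norm_iteratedFDerivWithin_eq_norm_iteratedDerivWithin]
      exact norm_iteratedFDerivWithin_mul_le hf hg (uniqueDiffOn_Icc hab) ht
        (by exact_mod_cast hn)
    refine h1.trans ?_
    have h2 : ∀ i ∈ Finset.range (n + 1), (n.choose i : ℝ) *
          ‖iteratedDerivWithin i f (Set.Icc a b) t‖ *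
          ‖iteratedDerivWithin (n - i) g (Set.Icc a b) t‖ ≤
        (n.choose i : ℝ) * (clNorm l a b f * clNorm l a b g) := by
      intro i hi
      have hi' : i ≤ l := le_trans (by simpa [Nat.lt_succ_iff] using hi) hn
      rw [mul_assoc]
      refine mul_le_mul_of_nonneg_left ?_ (by positivity)
      exact mul_le_mul (le_clNorm hab hf hi' ht)
        (le_clNorm hab hg (le_trans (Nat.sub_le n i) hn) ht)
        (norm_nonneg _) clNorm_nonneg
    refine (Finset.sum_le_sum h2).trans ?_
    rw [← Finset.sum_mul]
    refine mul_le_mul_of_nonneg_right ?_ (mul_nonneg clNorm_nonneg clNorm_nonneg)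
    rw [← Nat.cast_sum]
    rw [Nat.sum_range_choose]
    exact_mod_cast Nat.pow_le_pow_right (by norm_num) hn
  have := clNorm_le_of_ptwise hab (C := 2 ^ l * (clNorm l a b f * clNorm l a b g))
    (mul_nonneg (by positivity) (mul_nonneg clNorm_nonneg clNorm_nonneg)) key
  calc clNorm l a b (fun t => f t * g t) ≤
      (l + 1) * (2 ^ l * (clNorm l a b f * clNorm l a b g)) := this
  _ = _ := by ring

lemma clNorm_add_le (hab : a < b) {l : ℕ} {f g : ℝ → ℂ}
    (hf : ContDiffOn ℝ l f (Set.Icc a b)) (hg : ContDiffOn ℝ l g (Set.Icc a b)) :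
    clNorm l a b (fun t => f t + g t) ≤ clNorm l a b f + clNorm l a b g := by
  haveI := icc_ne hab
  rw [clNorm, clNorm, clNorm, ← Finset.sum_add_distrib]
  refine Finset.sum_le_sum fun j hj => ?_
  have hj' : j ≤ l := by simpa [Nat.lt_succ_iff] using hj
  refine Real.iSup_le (fun t => ?_) (add_nonneg sup_nn sup_nn)
  have : iteratedDerivWithin j (fun t => f t + g t) (Set.Icc a b) (t : ℝ) =
      iteratedDerivWithin j f (Set.Icc a b) t + iteratedDerivWithin j g (Set.Icc a b) t := by
    have := iteratedDerivWithin_add (f := f) (g := g) (n := j) t.2 (uniqueDiffOn_Icc hab)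
      ((hf.of_le (by exact_mod_cast hj')) _ t.2) ((hg.of_le (by exact_mod_cast hj')) _ t.2)
    exact this
  rw [this]
  refine (norm_add_le _ _).trans (add_le_add ?_ ?_)
  · exact le_ciSup (bdd_sup hab hf hj') t
  · exact le_ciSup (bdd_sup hab hg hj') t

lemma clNorm_sum_le (hab : a < b) {l : ℕ} {ι : Type*} (u : Finset ι) (f : ι → ℝ → ℂ)
    (hf : ∀ j ∈ u, ContDiffOn ℝ l (f j) (Set.Icc a b)) :
    clNorm l a b (fun t => ∑ j ∈ u, f j t) ≤ ∑ j ∈ u, clNorm l a b (f j) := by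
  classical
  induction u using Finset.induction with
  | empty => simp [clNorm_const hab (0 : ℂ)]
  | @insert i u hni ih =>
    simp only [Finset.sum_insert hni]
    refine le_trans ?_ (add_le_add_right (ih fun j hj => hf j (Finset.mem_insert_of_mem hj)) _)
    exact clNorm_add_le hab (hf i (Finset.mem_insert_self i u))
      (ContDiffOn.sum fun j hj => hf j (Finset.mem_insert_of_mem hj))

lemma vecClNorm_nonneg {m l : ℕ} {y : ℝ → Fin m → ℂ} : 0 ≤ vecClNorm l a b y :=
  Finset.sum_nonneg fun _ _ => clNorm_nonneg

lemma matClNorm_nonneg {m l : ℕ} {A : ℝ → Matrix (Fin m) (Fin m) ℂ} :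
    0 ≤ matClNorm l a b A :=
  Real.iSup_nonneg fun _ => vecClNorm_nonneg

lemma col_le_matClNorm {m l : ℕ} (A : ℝ → Matrix (Fin m) (Fin m) ℂ) (j : Fin m) :
    vecClNorm l a b (fun t i => A t i j) ≤ matClNorm l a b A := by
  rw [matClNorm]
  exact le_ciSup (Set.Finite.bddAbove
    (Set.finite_range fun j => vecClNorm l a b fun t i => A t i j)) j

lemma entry_le_matClNorm {m l : ℕ} (A : ℝ → Matrix (Fin m) (Fin m) ℂ) (i j : Fin m) :
    clNorm l a b (fun t => A t i j) ≤ matClNorm l a b A :=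
  le_trans (Finset.single_le_sum (f := fun i => clNorm l a b (fun t => A t i j))
    (fun _ _ => clNorm_nonneg) (Finset.mem_univ i)) (col_le_matClNorm A j)

lemma comp_le_vecClNorm {m l : ℕ} (y : ℝ → Fin m → ℂ) (j : Fin m) :
    clNorm l a b (fun t => y t j) ≤ vecClNorm l a b y :=
  Finset.single_le_sum (f := fun i => clNorm l a b (fun t => y t i))
    (fun _ _ => clNorm_nonneg) (Finset.mem_univ j)

/-- The master estimate. -/
lemma key_bound (hab : a < b) {m s : ℕ} (hs : 1 ≤ s)
    {D : ℝ → Matrix (Fin m) (Fin m) ℂ} (hD : MatCl (s - 1) a b D)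
    {y : ℝ → Fin m → ℂ} (hy : VecCl s a b y) :
    vecClNorm (s - 1) a b (fun t => (D t).mulVec (y t)) ≤
      ((m * m : ℝ) * (((s - 1 : ℕ) + 1) * 2 ^ (s - 1))) *
        (matClNorm (s - 1) a b D * vecClNorm s a b y) := by
  set l := s - 1 with hl
  set K : ℝ := ((l : ℝ) + 1) * 2 ^ l with hK
  have hK0 : 0 ≤ K := by positivity
  have hyl : ∀ j, ContDiffOn ℝ l (fun t => y t j) (Set.Icc a b) := fun j =>
    (hy j).of_le (by exact_mod_cast Nat.sub_le s 1)
  have hrw : ∀ i : Fin m, (fun t => (D t).mulVec (y t) i) =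
      fun t => ∑ j, D t i j * y t j := by
    intro i; funext t; simp [Matrix.mulVec, dotProduct]
  have step : ∀ i : Fin m, clNorm l a b (fun t => (D t).mulVec (y t) i) ≤
      ∑ _j : Fin m, K * (matClNorm l a b D * vecClNorm s a b y) := by
    intro i
    rw [hrw i]
    refine (clNorm_sum_le hab (Finset.univ : Finset (Fin m)) (fun j t => D t i j * y t j)
      (fun j _ => (hD i j).mul (hyl j))).trans ?_
    refine Finset.sum_le_sum fun j _ => ?_
    refine (clNorm_mul_le hab (hD i j) (hyl j)).trans ?_
    refine mul_le_mul_of_nonneg_left ?_ hK0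
    refine mul_le_mul (entry_le_matClNorm D i j)
      ((clNorm_mono (Nat.sub_le s 1) _).trans (comp_le_vecClNorm y j))
      clNorm_nonneg matClNorm_nonneg
  calc vecClNorm l a b (fun t => (D t).mulVec (y t)) ≤
      ∑ _i : Fin m, ∑ _j : Fin m, K * (matClNorm l a b D * vecClNorm s a b y) :=
        Finset.sum_le_sum fun i _ => step i
  _ = _ := by
      simp only [Finset.sum_const, Finset.card_univ, Fintype.card_fin, nsmul_eq_mul, hK]
      ring

end ProofHelpers

/-- For `A_k, A ∈ (C^(s-1))^{m×m}`, the following are equivalent as `k → ∞`: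
(i) strong convergence `‖(A_k − A)·y‖_(s-1) → 0` for every `y ∈ (C^(s))^m`;
(ii) `‖A_k − A‖_(s-1) → 0`;
(iii) uniform convergence `sup{‖(A_k − A)·y‖_(s-1) : ‖y‖_(s) ≤ 1} → 0`. -/
theorem strong_iff_norm_iff_uniform_convergence
    (a b : ℝ) (hab : a < b) (m s : ℕ) (hm : 1 ≤ m) (hs : 1 ≤ s)
    (A : ℝ → Matrix (Fin m) (Fin m) ℂ) (hA : MatCl (s - 1) a b A)
    (Ak : ℕ → ℝ → Matrix (Fin m) (Fin m) ℂ) (hAk : ∀ k, MatCl (s - 1) a b (Ak k)) :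
    ((∀ y : ℝ → Fin m → ℂ, VecCl s a b y →
        Tendsto (fun k => vecClNorm (s - 1) a b fun t => (Ak k t - A t).mulVec (y t))
          atTop (𝓝 0)) ↔
      Tendsto (fun k => matClNorm (s - 1) a b fun t => Ak k t - A t) atTop (𝓝 0)) ∧
    (Tendsto (fun k => matClNorm (s - 1) a b fun t => Ak k t - A t) atTop (𝓝 0) ↔
      Tendsto (fun k => sSup {v : ℝ | ∃ y : ℝ → Fin m → ℂ, VecCl s a b y ∧
          vecClNorm s a b y ≤ 1 ∧
          v = vecClNorm (s - 1) a b fun t => (Ak k t - A t).mulVec (y t)})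
        atTop (𝓝 0)) := by
  haveI : Nonempty (Fin m) := ⟨⟨0, hm⟩⟩
  set D : ℕ → ℝ → Matrix (Fin m) (Fin m) ℂ := fun k t => Ak k t - A t with hDdef
  have hD : ∀ k, MatCl (s - 1) a b (D k) := fun k i j => (hAk k i j).sub (hA i j)
  set C : ℝ := (m * m : ℝ) * (((s - 1 : ℕ) + 1) * 2 ^ (s - 1)) with hCdef
  have hC0 : 0 ≤ C := by positivity
  -- unit coordinate vectors
  set e : Fin m → Fin m → ℂ := fun j i => if i = j then 1 else 0 with he
  have heC : ∀ j, VecCl s a b (fun _ => e j) := fun j i => contDiffOn_const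
  have heN : ∀ j, vecClNorm s a b (fun _ => e j) ≤ 1 := by
    intro j
    have : vecClNorm s a b (fun _ => e j) = ∑ i, ‖e j i‖ := by
      rw [vecClNorm]; exact Finset.sum_congr rfl fun i _ => clNorm_const hab (e j i)
    rw [this, he]
    simp [apply_ite (fun z : ℂ => ‖z‖)]
  have hcol : ∀ k j, (fun t => (D k t).mulVec ((fun _ => e j) t)) =
      (fun t i => D k t i j) := by
    intro k j; funext t i
    simp [Matrix.mulVec, dotProduct, he]
  -- implication (ii) → (i)
  have ii_i : Tendsto (fun k => matClNorm (s - 1) a b (D k)) atTop (𝓝 0) →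
      ∀ y : ℝ → Fin m → ℂ, VecCl s a b y →
        Tendsto (fun k => vecClNorm (s - 1) a b fun t => (D k t).mulVec (y t))
          atTop (𝓝 0) := by
    intro h2 y hy
    refine squeeze_zero (fun _ => vecClNorm_nonneg)
      (fun k => key_bound hab hs (hD k) hy) ?_
    have := ((h2.mul_const (vecClNorm s a b y)).const_mul C)
    simpa using this
  -- implication (i) → (ii)
  have i_ii : (∀ y : ℝ → Fin m → ℂ, VecCl s a b y →
      Tendsto (fun k => vecClNorm (s - 1) a b fun t => (D k t).mulVec (y t))
        atTop (𝓝 0)) →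
      Tendsto (fun k => matClNorm (s - 1) a b (D k)) atTop (𝓝 0) := by
    intro h1
    have hcols : ∀ j : Fin m,
        Tendsto (fun k => vecClNorm (s - 1) a b (fun t i => D k t i j)) atTop (𝓝 0) := by
      intro j
      have := h1 (fun _ => e j) (heC j)
      simpa only [hcol] using this
    refine squeeze_zero (fun _ => matClNorm_nonneg)
      (g := fun k => ∑ j, vecClNorm (s - 1) a b (fun t i => D k t i j)) (fun k => ?_) ?_
    · rw [matClNorm]
      refine Real.iSup_le (fun j => ?_) (Finset.sum_nonneg fun _ _ => vecClNorm_nonneg)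
      exact Finset.single_le_sum
        (f := fun j => vecClNorm (s - 1) a b (fun t i => D k t i j))
        (fun _ _ => vecClNorm_nonneg) (Finset.mem_univ j)
    · have := tendsto_finset_sum (Finset.univ : Finset (Fin m)) (fun j _ => hcols j)
      simpa using this
  -- sets for (iii)
  set S : ℕ → Set ℝ := fun k => {v : ℝ | ∃ y : ℝ → Fin m → ℂ, VecCl s a b y ∧
      vecClNorm s a b y ≤ 1 ∧
      v = vecClNorm (s - 1) a b fun t => (D k t).mulVec (y t)} with hSdef
  have hSub : ∀ k, ∀ v ∈ S k, v ≤ C * matClNorm (s - 1) a b (D k) := by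
    rintro k v ⟨y, hy, hy1, rfl⟩
    refine (key_bound hab hs (hD k) hy).trans ?_
    exact mul_le_mul_of_nonneg_left
      (mul_le_of_le_one_right matClNorm_nonneg hy1) hC0
  have hS0 : ∀ k, (0 : ℝ) ∈ S k := by
    intro k
    refine ⟨fun _ _ => 0, fun i => contDiffOn_const, ?_, ?_⟩
    · have : vecClNorm s a b (fun (_ : ℝ) (_ : Fin m) => (0:ℂ)) = ∑ _i : Fin m, (0:ℝ) := by
        rw [vecClNorm]
        refine Finset.sum_congr rfl fun i _ => ?_
        rw [clNorm_const hab (0:ℂ)]; simp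
      rw [this]; simp
    · have h0 : (fun t => (D k t).mulVec (fun _ => (0:ℂ))) = (fun (_:ℝ) (_:Fin m) => (0:ℂ)) := by
        funext t i; simp [Matrix.mulVec, dotProduct]
      rw [h0, vecClNorm]
      rw [Finset.sum_congr rfl fun (i : Fin m) _ => clNorm_const hab (0:ℂ)]
      simp
  have hSbdd : ∀ k, BddAbove (S k) := fun k =>
    ⟨C * matClNorm (s - 1) a b (D k), fun v hv => hSub k v hv⟩
  -- (ii) → (iii)
  have ii_iii : Tendsto (fun k => matClNorm (s - 1) a b (D k)) atTop (𝓝 0) →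
      Tendsto (fun k => sSup (S k)) atTop (𝓝 0) := by
    intro h2
    refine squeeze_zero (fun k => le_csSup (hSbdd k) (hS0 k))
      (fun k => Real.sSup_le (hSub k) (mul_nonneg hC0 matClNorm_nonneg)) ?_
    have := h2.const_mul C
    simpa using this
  -- (iii) → (ii)
  have iii_ii : Tendsto (fun k => sSup (S k)) atTop (𝓝 0) →
      Tendsto (fun k => matClNorm (s - 1) a b (D k)) atTop (𝓝 0) := by
    intro h3
    refine squeeze_zero (fun _ => matClNorm_nonneg) (fun k => ?_) h3
    rw [matClNorm]
    refine Real.iSup_le (fun j => ?_) ?_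
    · refine le_csSup (hSbdd k) ?_
      exact ⟨fun _ => e j, heC j, heN j, by rw [hcol k j]⟩
    · exact le_csSup (hSbdd k) (hS0 k)
  exact ⟨⟨i_ii, ii_i⟩, ⟨ii_iii, iii_ii⟩⟩
end
end

section
/- Let A ∈ ℂ^{m×m} be a constant matrix, let n be a positive integer with n ≤ s, and let α_0, …, α_{n-1} ∈ ℂ^{r×m}. Then the set of solutions of the one-point boundary-value problem, K := { y ∈ (C^(s))^m : y'(t) + A·y(t) = 0 for all t ∈ [a,b] and Σ_{k=0}^{n-1} α_k·y^{(k)}(a) = 0 }, is a complex vector subspace with dim K = m − rank( Σ_{k=0}^{n-1} α_k·(−A)^k ). -/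
open Set Filter Topology

noncomputable section

namespace OnePointAux

open Set NormedSpace

attribute [local instance] Matrix.linftyOpNormedAddCommGroup Matrix.linftyOpNormedRing
  Matrix.linftyOpNormedAlgebra

variable {m : ℕ}

noncomputable section

/-- The linear map `M ↦ (P * M).mulVec c i`. -/
def entryL (c : Fin m → ℂ) (i : Fin m) (P : Matrix (Fin m) (Fin m) ℂ) :
    Matrix (Fin m) (Fin m) ℂ →ₗ[ℂ] ℂ where
  toFun M := (P * M).mulVec c i
  map_add' M N := by simp [Matrix.mul_add, Matrix.add_mulVec]
  map_smul' r M := by simp [Matrix.mul_smul, Matrix.smul_mulVec]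

lemma hasDerivAt_expMat (A : Matrix (Fin m) (Fin m) ℂ) (a t : ℝ) :
    HasDerivAt (fun u : ℝ => exp ((u - a) • A)) (A * exp ((t - a) • A)) t := by
  have h0 : HasDerivAt (fun u : ℝ => exp (u • A)) (A * exp ((t - a) • A)) (t - a) :=
    hasDerivAt_exp_smul_const' A (t - a)
  have h1 : HasDerivAt (fun u : ℝ => u - a) 1 t := (hasDerivAt_id t).sub_const a
  have h := h0.scomp t h1
  rw [one_smul] at h
  exact h

lemma hasDerivAt_entry (A : Matrix (Fin m) (Fin m) ℂ) (a : ℝ) (c : Fin m → ℂ) (i : Fin m)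
    (P : Matrix (Fin m) (Fin m) ℂ) (t : ℝ) :
    HasDerivAt (fun u : ℝ => (P * exp ((u - a) • A)).mulVec c i)
      ((P * (A * exp ((t - a) • A))).mulVec c i) t := by
  have h2 := hasDerivAt_expMat A a t
  let L := LinearMap.toContinuousLinearMap ((entryL c i P).restrictScalars ℝ)
  have h3 := L.hasFDerivAt.comp_hasDerivAt t h2
  exact h3

lemma contDiff_expMat (A : Matrix (Fin m) (Fin m) ℂ) (a : ℝ) (n : ℕ) :
    ContDiff ℝ n (fun u : ℝ => exp ((u - a) • A)) := by
  have hd : ∀ t, HasDerivAt (fun u : ℝ => exp ((u - a) • A)) (A * exp ((t - a) • A)) t :=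
    hasDerivAt_expMat A a
  have hdiff : Differentiable ℝ (fun u : ℝ => exp ((u - a) • A)) :=
    fun t => (hd t).differentiableAt
  induction n with
  | zero => exact contDiff_zero.mpr hdiff.continuous
  | succ n ih =>
    have hcast : ((n + 1 : ℕ) : WithTop ℕ∞) = (n : WithTop ℕ∞) + 1 := by exact_mod_cast rfl
    rw [hcast, contDiff_succ_iff_deriv]
    refine ⟨hdiff, by simp, ?_⟩
    have : deriv (fun u : ℝ => exp ((u - a) • A)) = fun t => A * exp ((t - a) • A) :=
      funext fun t => (hd t).deriv
    erw [this]
    exact contDiff_const.mul ih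


lemma hasDerivAt_sol (A : Matrix (Fin m) (Fin m) ℂ) (a : ℝ) (c : Fin m → ℂ) (i : Fin m)
    (t : ℝ) :
    HasDerivAt (fun u : ℝ => (exp ((u - a) • A)).mulVec c i)
      ((A.mulVec ((exp ((t - a) • A)).mulVec c)) i) t := by
  have h := hasDerivAt_entry A a c i 1 t
  simp only [Matrix.one_mul, ← Matrix.mulVec_mulVec] at h
  exact h

lemma contDiff_sol (A : Matrix (Fin m) (Fin m) ℂ) (a : ℝ) (c : Fin m → ℂ) (i : Fin m) (n : ℕ) :
    ContDiff ℝ n (fun u : ℝ => (exp ((u - a) • A)).mulVec c i) := by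
  have h := ((LinearMap.toContinuousLinearMap
    ((entryL c i (1 : Matrix (Fin m) (Fin m) ℂ)).restrictScalars ℝ)).contDiff (n := n)).comp
    (contDiff_expMat A a n)
  simp [entryL, Matrix.one_mul, Function.comp_def, LinearMap.coe_toContinuousLinearMap'] at h
  exact h

lemma iteratedDerivWithin_sol (A : Matrix (Fin m) (Fin m) ℂ) (a b : ℝ) (hab : a < b)
    (c : Fin m → ℂ) (i : Fin m) (k : ℕ) :
    ∀ t ∈ Icc a b,
      iteratedDerivWithin k (fun u : ℝ => (exp ((u - a) • A)).mulVec c i) (Icc a b) t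
        = ((A ^ k * exp ((t - a) • A)).mulVec c i) := by
  induction k with
  | zero => intro t ht; simp
  | succ k ih =>
    intro t ht
    have hu : UniqueDiffOn ℝ (Icc a b) := uniqueDiffOn_Icc hab
    rw [iteratedDerivWithin_succ]
    rw [derivWithin_congr ih (ih t ht)]
    have hd := hasDerivAt_entry A a c i (A ^ k) t
    have := (hd.hasDerivWithinAt).derivWithin (hu t ht)
    rw [this, ← mul_assoc, ← pow_succ]

/-- At `t = a`, the `k`-th within-derivative is `(A^k).mulVec c i`. -/
lemma iteratedDerivWithin_sol_at_a (A : Matrix (Fin m) (Fin m) ℂ) (a b : ℝ) (hab : a < b)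
    (c : Fin m → ℂ) (i : Fin m) (k : ℕ) :
    iteratedDerivWithin k (fun u : ℝ => (exp ((u - a) • A)).mulVec c i) (Icc a b) a
      = ((A ^ k).mulVec c i) := by
  have h := iteratedDerivWithin_sol A a b hab c i k a (left_mem_Icc.mpr hab.le)
  simpa [exp_zero] using h

lemma sumMulVec {r' m' : ℕ} (f : ℕ → Matrix (Fin r') (Fin m') ℂ) (t : Finset ℕ)
    (c : Fin m' → ℂ) : (∑ k ∈ t, f k).mulVec c = ∑ k ∈ t, (f k).mulVec c := by
  classical
  induction t using Finset.induction_on with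
  | empty => simp
  | insert _ _ h ih => rw [Finset.sum_insert h, Finset.sum_insert h, Matrix.add_mulVec, ih]

/-- Uniqueness: any `C^s` solution of `y' = B·y` on `[a,b]` agrees with the exponential
solution with the same value at `a`. -/
lemma sol_unique (B : Matrix (Fin m) (Fin m) ℂ) (a b : ℝ) (hab : a < b)
    (y : ℝ → Fin m → ℂ)
    (hcont : ContinuousOn y (Icc a b))
    (hder : ∀ t ∈ Ico a b, HasDerivWithinAt y (B.mulVec (y t)) (Ici t) t) :
    EqOn y (fun t => (exp ((t - a) • B)).mulVec (y a)) (Icc a b) := by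
  set g : ℝ → Fin m → ℂ := fun t => (exp ((t - a) • B)).mulVec (y a) with hg
  let L : (Fin m → ℂ) →L[ℝ] (Fin m → ℂ) :=
    LinearMap.toContinuousLinearMap ((Matrix.mulVecLin B).restrictScalars ℝ)
  have hL : ∀ x, L x = B.mulVec x := fun x => rfl
  have hga : y a = g a := by simp [hg, exp_zero]
  refine ODE_solution_unique_of_mem_Icc_right (v := fun _ x => B.mulVec x)
    (s := fun _ => univ) (K := ‖L‖₊) (fun _ _ => ?_) hcont hder (fun _ _ => trivial)
    ?_ ?_ (fun _ _ => trivial) hga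
  · have := L.lipschitz
    exact this.lipschitzOnWith (s := univ)
  · -- continuity of g
    have : ∀ i, Continuous fun t => g t i := fun i =>
      ((contDiff_sol B a (y a) i 0).continuous)
    exact (continuous_pi this).continuousOn
  · intro t _
    have hd : HasDerivAt g (B.mulVec (g t)) t := by
      rw [hasDerivAt_pi]
      intro i
      exact hasDerivAt_sol B a (y a) i t
    exact hd.hasDerivWithinAt


end
end OnePointAux



open NormedSpace OnePointAux

/-- For a constant matrix `A ∈ ℂ^{m×m}` and the one-point boundary
condition `Σ_{k=0}^{n-1} α_k y^{(k)}(a) = 0` with `1 ≤ n ≤ s`, the solution set of the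
homogeneous problem is a complex subspace of dimension
`m − rank(Σ_{k=0}^{n-1} α_k (−A)^k)`. -/

theorem one_point_problem_kernel_dim
    (a b : ℝ) (hab : a < b) (m s r : ℕ) (hm : 1 ≤ m) (hs : 1 ≤ s) (hr : 1 ≤ r)
    (A : Matrix (Fin m) (Fin m) ℂ) (n : ℕ) (hn : 1 ≤ n) (hns : n ≤ s)
    (α : ℕ → Matrix (Fin r) (Fin m) ℂ) :
    ∃ K : Submodule ℂ (↥(Set.Icc a b) → Fin m → ℂ),
      (K : Set (↥(Set.Icc a b) → Fin m → ℂ)) =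
        {g | ∃ y : ℝ → Fin m → ℂ, VecCl s a b y ∧
          (∀ t ∈ Set.Icc a b, ∀ i,
            derivWithin (fun u => y u i) (Set.Icc a b) t + A.mulVec (y t) i = 0) ∧
          (∑ k ∈ Finset.range n,
            (α k).mulVec (fun i => iteratedDerivWithin k (fun u => y u i) (Set.Icc a b) a)) = 0 ∧
          (Set.Icc a b).restrict y = g} ∧
      Module.finrank ℂ K = m - (∑ k ∈ Finset.range n, α k * (-A) ^ k).rank := by
  classical
  set B : Matrix (Fin m) (Fin m) ℂ := -A with hB
  set Mm : Matrix (Fin r) (Fin m) ℂ := ∑ k ∈ Finset.range n, α k * (-A) ^ k with hMm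
  set sol : (Fin m → ℂ) → ℝ → Fin m → ℂ := fun c t => (exp ((t - a) • B)).mulVec c with hsol
  have ha : a ∈ Set.Icc a b := left_mem_Icc.mpr hab.le
  -- the linear map c ↦ restriction of the exponential solution
  let T : (Fin m → ℂ) →ₗ[ℂ] (↥(Set.Icc a b) → Fin m → ℂ) :=
    { toFun := fun c => (Set.Icc a b).restrict (sol c)
      map_add' := fun c d => by
        funext t j; simp [hsol, Matrix.mulVec_add, Set.restrict]
      map_smul' := fun z c => by
        funext t j; simp [hsol, Matrix.mulVec_smul, Set.restrict] }
  have hTa : ∀ c, T c ⟨a, ha⟩ = c := by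
    intro c; show sol c a = c; simp [hsol, exp_zero]
  have hTinj : Function.Injective T := by
    intro c d h
    have := congrFun h ⟨a, ha⟩
    rwa [hTa, hTa] at this
  refine ⟨Submodule.map T (LinearMap.ker (Matrix.mulVecLin Mm)), ?_, ?_⟩
  · ext g
    simp only [Submodule.map_coe, Set.mem_image, SetLike.mem_coe, LinearMap.mem_ker,
      Set.mem_setOf_eq]
    constructor
    · rintro ⟨c, hc, rfl⟩
      refine ⟨sol c, ?_, ?_, ?_, rfl⟩
      · intro i
        exact ((contDiff_sol B a c i s).contDiffOn)
      · intro t ht i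
        have hd := hasDerivAt_sol B a c i t
        have hdw := (hd.hasDerivWithinAt).derivWithin ((uniqueDiffOn_Icc hab) t ht)
        show derivWithin (fun u => sol c u i) (Set.Icc a b) t + A.mulVec (sol c t) i = 0
        rw [hdw]
        show B.mulVec (sol c t) i + A.mulVec (sol c t) i = 0
        rw [hB, Matrix.neg_mulVec]
        simp
      · have hcomp : ∀ k, (fun i => iteratedDerivWithin k (fun u => sol c u i)
            (Set.Icc a b) a) = (B ^ k).mulVec c := by
          intro k; funext i
          exact iteratedDerivWithin_sol_at_a B a b hab c i k
        have : (∑ k ∈ Finset.range n, (α k).mulVec ((B ^ k).mulVec c)) = Mm.mulVec c := by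
          rw [hMm, ← hB]
          rw [sumMulVec]
          exact Finset.sum_congr rfl fun k _ => by rw [Matrix.mulVec_mulVec]
        simp only [hcomp, this]
        have : Matrix.mulVecLin Mm c = Mm.mulVec c := rfl
        rw [← this, hc]
    · rintro ⟨y, hy, hode, hbc, rfl⟩
      -- y agrees with the exponential solution with c = y a
      have hcont : ContinuousOn y (Set.Icc a b) := by
        have : ∀ i, ContinuousOn (fun t => y t i) (Set.Icc a b) :=
          fun i => (hy i).continuousOn
        exact continuousOn_pi.mpr this
      have hs1 : (1 : WithTop ℕ∞) ≤ (s : ℕ∞) := by exact_mod_cast hs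
      have hder : ∀ t ∈ Set.Ico a b, HasDerivWithinAt y (B.mulVec (y t)) (Set.Ici t) t := by
        intro t ht
        have htIcc : t ∈ Set.Icc a b := Ico_subset_Icc_self ht
        have hIcc : HasDerivWithinAt y
            (fun i => derivWithin (fun u => y u i) (Set.Icc a b) t) (Set.Icc a b) t := by
          rw [hasDerivWithinAt_pi]
          intro i
          exact (((hy i).differentiableOn (by norm_cast; omega)) t htIcc).hasDerivWithinAt
        have hval : (fun i => derivWithin (fun u => y u i) (Set.Icc a b) t) = B.mulVec (y t) := by
          funext i
          have := hode t htIcc i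
          have h2 : derivWithin (fun u => y u i) (Set.Icc a b) t = -(A.mulVec (y t) i) := by
            linear_combination this
          rw [h2, hB, Matrix.neg_mulVec]
          simp
        rw [hval] at hIcc
        refine hIcc.mono_of_mem_nhdsWithin ?_
        refine mem_nhdsWithin.mpr ⟨Set.Iio b, isOpen_Iio, ht.2, ?_⟩
        rintro x ⟨hx1, hx2⟩
        exact ⟨le_trans ht.1 hx2, le_of_lt hx1⟩
      have hEq : EqOn y (sol (y a)) (Set.Icc a b) :=
        sol_unique B a b hab y hcont hder
      refine ⟨y a, ?_, ?_⟩
      · -- boundary condition gives Mm.mulVec (y a) = 0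
        show Matrix.mulVecLin Mm (y a) = 0
        have hcongr : ∀ k, (fun i => iteratedDerivWithin k (fun u => y u i) (Set.Icc a b) a)
            = (B ^ k).mulVec (y a) := by
          intro k; funext i
          have hEqi : EqOn (fun u => y u i) (fun u => sol (y a) u i) (Set.Icc a b) :=
            fun t ht => congrFun (hEq ht) i
          have := iteratedDerivWithin_congr (n := k) hEqi ha
          rw [this]
          exact iteratedDerivWithin_sol_at_a B a b hab (y a) i k
        have hsum : (∑ k ∈ Finset.range n, (α k).mulVec ((B ^ k).mulVec (y a)))
            = Mm.mulVec (y a) := by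
          rw [hMm, ← hB, sumMulVec]
          exact Finset.sum_congr rfl fun k _ => by rw [Matrix.mulVec_mulVec]
        have : Matrix.mulVecLin Mm (y a) = Mm.mulVec (y a) := rfl
        rw [this, ← hsum, ← hbc]
        simp only [hcongr]
      · funext t
        exact (hEq t.2).symm
  · -- dimension count
    have h1 : Module.finrank ℂ (Submodule.map T (LinearMap.ker (Matrix.mulVecLin Mm)))
        = Module.finrank ℂ (LinearMap.ker (Matrix.mulVecLin Mm)) :=
      (LinearEquiv.finrank_eq
        (Submodule.equivMapOfInjective T hTinj (LinearMap.ker (Matrix.mulVecLin Mm)))).symm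
    have h2 := LinearMap.finrank_range_add_finrank_ker (Matrix.mulVecLin Mm)
    have h3 : Module.finrank ℂ (Fin m → ℂ) = m := Module.finrank_fin_fun ℂ
    have h4 : Mm.rank = Module.finrank ℂ (LinearMap.range (Matrix.mulVecLin Mm)) := rfl
    rw [h1, h4]
    omega
end
end
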